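/- Let d ≥ 1 and let j : (0,∞) → [0,∞) be nonincreasing. Suppose there exist c, R, α > 0 such that r^{d+2}·j(r) ≥ c·(r/s)^α·s^{d+2}·j(s) for all 0 < s ≤ r ≤ R. Then there exists C > 0 such that m₂(r) ≤ C·r^{d+2}·j(r) for all r ∈ (0, R]. -/

import Mathlib

open MeasureTheory Metric ENNReal

/-- Truncated second moment `m₂(r) = ∫_{B(0,r)} |x|² j(|x|) dx` in `ℝ^d`. -/
noncomputable def m2 (d : ℕ) (j : ℝ → ℝ) (r : ℝ) : ℝ≥0∞ :=
  ∫⁻ x in Metric.ball (0 : EuclideanSpace ℝ (Fin d)) r,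
    ENNReal.ofReal (‖x‖ ^ 2 * j ‖x‖)

open Set Module

/-!
Split `B(0, r)` into the dyadic annuli `r/2^(k+1) < |x| ≤ r/2^k`. Since `j` is nonincreasing,
the annulus `k` contributes at most `|B(0,1)| (r/2^k)^(d+2) j(r/2^(k+1))`, and the scaling
hypothesis with `s = r/2^(k+1)` bounds this by `2^(d+2) c⁻¹ 2^(-α(k+1)) r^(d+2) j(r)`.
Because `α > 0` these bounds form a convergent geometric series.
-/

section DyadicAnnulus

variable {E : Type*} [NormedAddCommGroup E]

def dyadicAnnulus (r : ℝ) (k : ℕ) : Set E :=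
  closedBall 0 (r / 2 ^ k) \ closedBall 0 (r / 2 ^ (k + 1))

theorem exists_mem_dyadicAnnulus {x : E} {r : ℝ} (hx : x ≠ 0) (hxr : ‖x‖ ≤ r) :
    ∃ k : ℕ, x ∈ dyadicAnnulus r k := by
  have hx0 : 0 < ‖x‖ := norm_pos_iff.mpr hx
  obtain ⟨k, hk, hk'⟩ := exists_nat_pow_near ((one_le_div hx0).mpr hxr) one_lt_two
  refine ⟨k, ?_, ?_⟩
  · rw [mem_closedBall_zero_iff, le_div_iff₀ (by positivity), mul_comm]
    rwa [le_div_iff₀ hx0] at hk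
  · rw [mem_closedBall_zero_iff, not_le, div_lt_iff₀ (by positivity), mul_comm]
    rwa [div_lt_iff₀ hx0] at hk'

theorem setLIntegral_ball_le_tsum_dyadicAnnulus [MeasurableSpace E] [MeasurableSingletonClass E]
    (μ : Measure E) {f : E → ℝ≥0∞} (hf : f 0 = 0) (r : ℝ) :
    ∫⁻ x in ball 0 r, f x ∂μ ≤ ∑' k : ℕ, ∫⁻ x in dyadicAnnulus r k, f x ∂μ := by
  have hcover : ball (0 : E) r ⊆ {0} ∪ ⋃ k : ℕ, dyadicAnnulus r k := by
    intro x hx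
    rcases eq_or_ne x 0 with rfl | hx0
    · exact Or.inl rfl
    · exact Or.inr (mem_iUnion.mpr (exists_mem_dyadicAnnulus hx0 (mem_ball_zero_iff.mp hx).le))
  calc ∫⁻ x in ball 0 r, f x ∂μ
      ≤ ∫⁻ x in {0} ∪ ⋃ k : ℕ, dyadicAnnulus r k, f x ∂μ := lintegral_mono_set hcover
    _ ≤ ∫⁻ x in {0}, f x ∂μ + ∫⁻ x in ⋃ k : ℕ, dyadicAnnulus r k, f x ∂μ :=
      lintegral_union_le _ _ _
    _ ≤ ∑' k : ℕ, ∫⁻ x in dyadicAnnulus r k, f x ∂μ := by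
      rw [lintegral_singleton, hf, zero_mul, zero_add]
      exact lintegral_iUnion_le _ _

theorem setLIntegral_annulus_le [NormedSpace ℝ E] [FiniteDimensional ℝ E] [MeasurableSpace E]
    [BorelSpace E] (μ : Measure E) [μ.IsAddHaarMeasure] {g : ℝ → ℝ}
    (hg0 : ∀ t, 0 < t → 0 ≤ g t) (hg : AntitoneOn g (Ioi 0)) (p : ℕ) {a b : ℝ}
    (ha : 0 < a) (hb : 0 ≤ b) :
    ∫⁻ x in closedBall 0 b \ closedBall 0 a, ENNReal.ofReal (‖x‖ ^ p * g ‖x‖) ∂μ ≤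
      ENNReal.ofReal (b ^ (finrank ℝ E + p) * g a) * μ (ball 0 1) := by
  calc ∫⁻ x in closedBall 0 b \ closedBall 0 a, ENNReal.ofReal (‖x‖ ^ p * g ‖x‖) ∂μ
      ≤ ∫⁻ _ in closedBall 0 b \ closedBall 0 a, ENNReal.ofReal (b ^ p * g a) ∂μ := by
        refine setLIntegral_mono' (measurableSet_closedBall.diff measurableSet_closedBall) ?_
        rintro x ⟨hxb, hxa⟩
        rw [mem_closedBall_zero_iff] at hxb
        rw [mem_closedBall_zero_iff, not_le] at hxa
        have hx0 : 0 < ‖x‖ := ha.trans hxa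
        gcongr
        · exact hg0 _ hx0
        · exact hg ha hx0 hxa.le
    _ = ENNReal.ofReal (b ^ p * g a) * μ (closedBall 0 b \ closedBall 0 a) :=
        setLIntegral_const _ _
    _ ≤ ENNReal.ofReal (b ^ p * g a) * μ (closedBall 0 b) := by gcongr; exact sdiff_subset
    _ = ENNReal.ofReal (b ^ (finrank ℝ E + p) * g a) * μ (ball 0 1) := by
        have hga : 0 ≤ b ^ p * g a := mul_nonneg (by positivity) (hg0 a ha)
        rw [Measure.addHaar_closedBall μ 0 hb, ← mul_assoc, ← ENNReal.ofReal_mul hga, pow_add]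
        ring_nf

end DyadicAnnulus

theorem m2_le_tsum_dyadic {d : ℕ} {j : ℝ → ℝ} (hnonneg : ∀ r : ℝ, 0 < r → 0 ≤ j r)
    (hmono : AntitoneOn j (Ioi 0)) {r : ℝ} (hr : 0 < r) :
    m2 d j r ≤ ∑' k : ℕ, ENNReal.ofReal ((r / 2 ^ k) ^ (d + 2) * j (r / 2 ^ (k + 1))) *
      volume (ball (0 : EuclideanSpace ℝ (Fin d)) 1) := by
  refine (setLIntegral_ball_le_tsum_dyadicAnnulus volume (by simp) r).trans
    (ENNReal.tsum_le_tsum fun k => ?_)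
  simpa only [dyadicAnnulus, finrank_euclideanSpace_fin] using
    setLIntegral_annulus_le (volume : Measure (EuclideanSpace ℝ (Fin d))) hnonneg hmono 2
      (by positivity : 0 < r / 2 ^ (k + 1)) (by positivity : 0 ≤ r / 2 ^ k)

section Scaling

variable {j : ℝ → ℝ} {n : ℕ} {c R α : ℝ} (hc : 0 < c)
  (hscale : ∀ s r : ℝ, 0 < s → s ≤ r → r ≤ R →
    c * (r / s) ^ α * (s ^ n * j s) ≤ r ^ n * j r)
  {r : ℝ} (hr : 0 < r) (hrR : r ≤ R)
include hc hscale hr hrR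

theorem pow_mul_le_of_scaling_dyadic (k : ℕ) :
    (r / 2 ^ k) ^ n * j (r / 2 ^ k) ≤ ((2 : ℝ) ^ α)⁻¹ ^ k / c * (r ^ n * j r) := by
  have h := hscale (r / 2 ^ k) r (by positivity)
    (div_le_self hr.le (one_le_pow₀ one_le_two)) hrR
  rw [div_div_cancel₀ hr.ne', ← Real.rpow_pow_comm zero_le_two] at h
  have hpos : 0 < c * (2 ^ α) ^ k := by positivity
  calc (r / 2 ^ k) ^ n * j (r / 2 ^ k) ≤ r ^ n * j r / (c * (2 ^ α) ^ k) :=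
        (le_div_iff₀' hpos).mpr h
    _ = ((2 : ℝ) ^ α)⁻¹ ^ k / c * (r ^ n * j r) := by rw [inv_pow]; ring

theorem pow_mul_le_of_scaling_dyadic_succ (k : ℕ) :
    (r / 2 ^ k) ^ n * j (r / 2 ^ (k + 1)) ≤
      2 ^ n / c * ((2 : ℝ) ^ α)⁻¹ * (r ^ n * j r) * ((2 : ℝ) ^ α)⁻¹ ^ k := by
  have hhalf : r / 2 ^ k = 2 * (r / 2 ^ (k + 1)) := by rw [pow_succ]; field_simp
  calc (r / 2 ^ k) ^ n * j (r / 2 ^ (k + 1))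
      = 2 ^ n * ((r / 2 ^ (k + 1)) ^ n * j (r / 2 ^ (k + 1))) := by
        rw [hhalf, mul_pow, mul_assoc]
    _ ≤ 2 ^ n * (((2 : ℝ) ^ α)⁻¹ ^ (k + 1) / c * (r ^ n * j r)) := by
        gcongr 2 ^ n * ?_; exact pow_mul_le_of_scaling_dyadic hc hscale hr hrR (k + 1)
    _ = 2 ^ n / c * ((2 : ℝ) ^ α)⁻¹ * (r ^ n * j r) * ((2 : ℝ) ^ α)⁻¹ ^ k := by ring

end Scaling

theorem ENNReal.tsum_ofReal_mul_geometric {a q : ℝ} (ha : 0 ≤ a) (hq0 : 0 ≤ q) (hq1 : q < 1) :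
    ∑' k : ℕ, ENNReal.ofReal (a * q ^ k) = ENNReal.ofReal (a * (1 - q)⁻¹) := by
  rw [← ENNReal.ofReal_tsum_of_nonneg (fun k => by positivity)
    ((summable_geometric_of_lt_one hq0 hq1).mul_left a), tsum_mul_left,
    tsum_geometric_of_lt_one hq0 hq1]

theorem stmt2_general (d : ℕ) (j : ℝ → ℝ)
    (hnonneg : ∀ r : ℝ, 0 < r → 0 ≤ j r)
    (hmono : AntitoneOn j (Set.Ioi (0 : ℝ)))
    (c R α : ℝ) (hc : 0 < c) (hα : 0 < α)
    (hscale : ∀ s r : ℝ, 0 < s → s ≤ r → r ≤ R →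
      c * (r / s) ^ α * (s ^ (d + 2) * j s) ≤ r ^ (d + 2) * j r) :
    ∃ C : ℝ, 0 < C ∧ ∀ r : ℝ, 0 < r → r ≤ R →
      m2 d j r ≤ ENNReal.ofReal (C * (r ^ (d + 2) * j r)) := by
  set V := volume (ball (0 : EuclideanSpace ℝ (Fin d)) 1)
  have hV : V ≠ ⊤ := measure_ball_lt_top.ne
  have hV0 : 0 < V.toReal := ENNReal.toReal_pos (measure_ball_pos _ _ one_pos).ne' hV
  set q : ℝ := ((2 : ℝ) ^ α)⁻¹
  have hq0 : 0 < q := by positivity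
  have hq1 : q < 1 := inv_lt_one_of_one_lt₀ (Real.one_lt_rpow one_lt_two hα)
  refine ⟨2 ^ (d + 2) / c * q * (1 - q)⁻¹ * V.toReal,
    by have := sub_pos.mpr hq1; positivity, fun r hr hrR => ?_⟩
  have hD : 0 ≤ r ^ (d + 2) * j r := mul_nonneg (by positivity) (hnonneg r hr)
  calc m2 d j r
        ≤ ∑' k : ℕ, ENNReal.ofReal ((r / 2 ^ k) ^ (d + 2) * j (r / 2 ^ (k + 1))) * V :=
        m2_le_tsum_dyadic hnonneg hmono hr
    _ ≤ ∑' k : ℕ, ENNReal.ofReal (2 ^ (d + 2) / c * q * (r ^ (d + 2) * j r) * q ^ k) * V :=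
        ENNReal.tsum_le_tsum fun k => by
          gcongr ENNReal.ofReal ?_ * V
          exact pow_mul_le_of_scaling_dyadic_succ hc hscale hr hrR k
    _ = ENNReal.ofReal (2 ^ (d + 2) / c * q * (r ^ (d + 2) * j r) * (1 - q)⁻¹) * V := by
        rw [ENNReal.tsum_mul_right,
          ENNReal.tsum_ofReal_mul_geometric (by positivity) hq0.le hq1]
    _ = ENNReal.ofReal (2 ^ (d + 2) / c * q * (1 - q)⁻¹ * V.toReal * (r ^ (d + 2) * j r)) := by
        rw [← ENNReal.ofReal_toReal hV, ← ENNReal.ofReal_mul (by positivity),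
          ENNReal.toReal_ofReal hV0.le]
        ring_nf

theorem stmt2 (d : ℕ) (hd : 1 ≤ d) (j : ℝ → ℝ)
    (hnonneg : ∀ r : ℝ, 0 < r → 0 ≤ j r)
    (hmono : AntitoneOn j (Set.Ioi (0 : ℝ)))
    (c R α : ℝ) (hc : 0 < c) (hR : 0 < R) (hα : 0 < α)
    (hscale : ∀ s r : ℝ, 0 < s → s ≤ r → r ≤ R →
      c * (r / s) ^ α * (s ^ (d + 2) * j s) ≤ r ^ (d + 2) * j r) :
    ∃ C : ℝ, 0 < C ∧ ∀ r : ℝ, 0 < r → r ≤ R →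
      m2 d j r ≤ ENNReal.ofReal (C * (r ^ (d + 2) * j r)) :=
  stmt2_general d j hnonneg hmono c R α hc hα hscale
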